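/- Let m ≥ 2 be a natural number, let v₁, …, v_m be real numbers, let a := j₀ + 1/2 for a natural number j₀ with 1 ≤ j₀ ≤ m − 1, and set s(j) := −|a − j| for j ∈ {1, …, m}. Define hardmax weights by w(j) := 1/|M| if j ∈ M and w(j) := 0 otherwise, where M is the set of maximizers of s over {1, …, m}. Then Σ_{j=1}^{m} w(j)·v_j = (v_{j₀} + v_{j₀+1})/2. -/
import Mathlib

lemma half_le_abs (j₀ n : ℕ) : (1:ℝ)/2 ≤ |((j₀:ℝ) + 1/2) - (n:ℝ)| := by
  rcases le_or_gt n j₀ with h | h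
  · have : (n:ℝ) ≤ j₀ := by exact_mod_cast h
    rw [abs_of_nonneg (by linarith)]; linarith
  · have : (j₀:ℝ) + 1 ≤ n := by exact_mod_cast h
    rw [abs_of_nonpos (by linarith)]; linarith

lemma abs_le_half (j₀ n : ℕ) (h : |((j₀:ℝ) + 1/2) - (n:ℝ)| ≤ 1/2) :
    n = j₀ ∨ n = j₀ + 1 := by
  rcases le_or_gt n j₀ with h' | h'
  · left
    have hc : (n:ℝ) ≤ j₀ := by exact_mod_cast h'
    rw [abs_of_nonneg (by linarith)] at h
    have h3 : (j₀:ℕ) ≤ n := by exact_mod_cast (by linarith : (j₀:ℝ) ≤ n)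
    omega
  · right
    have hc : (j₀:ℝ) + 1 ≤ n := by exact_mod_cast h'
    rw [abs_of_nonpos (by linarith)] at h
    have : (n:ℝ) ≤ j₀ + 1 := by linarith
    have h2 : n ≤ j₀ + 1 := by exact_mod_cast this
    omega

/-- Hardmax pooling in the tie case: with scores `s(j) = -|a - j|` for
`a = j₀ + 1/2`, `1 ≤ j₀ ≤ m - 1`, and hardmax weights `w(j) = 1/|M|` on the
set `M` of maximizers and `0` elsewhere, the weighted sum of values equals
the average `(v j₀ + v (j₀+1)) / 2`. -/
theorem hardmax_tie_pooling (m : ℕ) (hm : 2 ≤ m) (v : ℕ → ℝ)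
    (j₀ : ℕ) (h1 : 1 ≤ j₀) (h2 : j₀ ≤ m - 1) :
    ∑ j ∈ Finset.Icc 1 m,
        ({j : ℕ | j ∈ Finset.Icc 1 m ∧
            ∀ j' ∈ Finset.Icc 1 m,
              -|((j₀ : ℝ) + 1 / 2) - (j' : ℝ)| ≤ -|((j₀ : ℝ) + 1 / 2) - (j : ℝ)|}.indicator
          (fun _ =>
            (({j : ℕ | j ∈ Finset.Icc 1 m ∧
                ∀ j' ∈ Finset.Icc 1 m,
                  -|((j₀ : ℝ) + 1 / 2) - (j' : ℝ)| ≤ -|((j₀ : ℝ) + 1 / 2) - (j : ℝ)|}.ncard : ℝ))⁻¹)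
          j) * v j
      = (v j₀ + v (j₀ + 1)) / 2 := by
  have hj₀m : j₀ ∈ Finset.Icc 1 m := by simp; omega
  have hj₁m : j₀ + 1 ∈ Finset.Icc 1 m := by simp; omega
  have hM : {j : ℕ | j ∈ Finset.Icc 1 m ∧
            ∀ j' ∈ Finset.Icc 1 m,
              -|((j₀ : ℝ) + 1 / 2) - (j' : ℝ)| ≤ -|((j₀ : ℝ) + 1 / 2) - (j : ℝ)|}
      = {j₀, j₀ + 1} := by
    ext j
    simp only [Set.mem_setOf_eq, Set.mem_insert_iff, Set.mem_singleton_iff]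
    constructor
    · rintro ⟨hjm, hmax⟩
      have := hmax j₀ hj₀m
      have habs : |((j₀:ℝ) + 1/2) - (j:ℝ)| ≤ 1/2 := by
        have h0 : |((j₀:ℝ) + 1/2) - (j₀:ℝ)| = 1/2 := by
          rw [abs_of_nonneg] <;> linarith
        linarith [this, h0 ▸ this]
      exact abs_le_half j₀ j habs
    · rintro (h | h) <;> rw [h]
      · refine ⟨hj₀m, fun j' _ => ?_⟩
        have h0 : |((j₀:ℝ) + 1/2) - (j₀:ℝ)| = 1/2 := by
          rw [abs_of_nonneg] <;> linarith
        have := half_le_abs j₀ j'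
        linarith
      · refine ⟨hj₁m, fun j' _ => ?_⟩
        have h0 : |((j₀:ℝ) + 1/2) - ((j₀:ℕ) + 1 : ℕ)| = 1/2 := by
          push_cast
          rw [abs_of_nonpos] <;> linarith
        have := half_le_abs j₀ j'
        rw [h0]
        linarith
  rw [hM]
  have hcard : ({j₀, j₀ + 1} : Set ℕ).ncard = 2 := by
    rw [Set.ncard_pair (by omega)]
  rw [hcard]
  have hsub : ({j₀, j₀ + 1} : Finset ℕ) ⊆ Finset.Icc 1 m := by
    intro x hx
    simp at hx
    rcases hx with rfl | rfl <;> assumption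
  rw [← Finset.sum_subset hsub]
  · rw [Finset.sum_pair (by omega)]
    have h₀ : (j₀:ℕ) ∈ ({j₀, j₀+1} : Set ℕ) := by simp
    have h₁ : (j₀+1:ℕ) ∈ ({j₀, j₀+1} : Set ℕ) := by simp
    rw [Set.indicator_of_mem h₀, Set.indicator_of_mem h₁]
    push_cast
    ring
  · intro x _ hx
    have : x ∉ ({j₀, j₀+1} : Set ℕ) := by
      simpa using hx
    rw [Set.indicator_of_notMem this, zero_mul]
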